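/- arXiv:1412.1613 — 2 statements merged into one kernel-verified Lean document; each statement's English description precedes it below -/
import Mathlib

section
/- Define q₀ as above. Then for every k, l ∈ {1,...,n}, the double sum of q₀(A,B) over all subsets A of [n] with |A| = k and all subsets B of [n] with |B| = l equals 1. -/
/-!
For `B ⊆ A` with `#A = k`, `#B = l`, the value `q₀(A, B) = (n-k)! (k-l)! l! / n!` is the reciprocal
of the number `C(n,k) C(k,l)` of nested pairs `B ⊆ A ⊆ [n]` of these sizes, and `q₀` vanishes on
non-nested pairs. Hence for `l ≤ k` the double sum counts each nested pair with weight
`1 / (C(n,k) C(k,l))`; the case `k < l` follows since `q₀` is symmetric.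
-/

open Finset Nat

/-- The "top set" of size `k` of a permutation `σ` of `Fin n`:
the image under `σ` of the last `k` positions `{n-k,...,n-1}`. -/
def topSet {n : ℕ} (σ : Equiv.Perm (Fin n)) (k : ℕ) : Finset (Fin n) :=
  (Finset.univ.filter fun i : Fin n => n - k ≤ (i : ℕ)).image σ

/-- The bivariate relative quality function in the i.i.d. case. -/
def q0 (n : ℕ) (A B : Finset (Fin n)) : ℚ :=
  if B ⊆ A then
    ((n - A.card)! * (A.card - B.card)! * (B.card)! : ℕ) / (n ! : ℚ)
  else if A ⊆ B then
    ((n - B.card)! * (B.card - A.card)! * (A.card)! : ℕ) / (n ! : ℚ)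
  else 0

theorem q0_comm (n : ℕ) (A B : Finset (Fin n)) : q0 n A B = q0 n B A := by
  by_cases hBA : B ⊆ A
  · by_cases hAB : A ⊆ B
    · rw [Subset.antisymm hAB hBA]
    · simp [q0, hBA, hAB]
  · simp [q0, hBA]

theorem q0_of_card_le {n : ℕ} {A B : Finset (Fin n)} (h : #B ≤ #A) :
    q0 n A B = if B ⊆ A then ((n - #A)! * (#A - #B)! * (#B)! : ℕ) / (n ! : ℚ) else 0 := by
  by_cases hBA : B ⊆ A
  · simp [q0, hBA]
  · have hAB : ¬ A ⊆ B := fun hAB => hBA (eq_of_subset_of_card_le hAB h ▸ Subset.refl A)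
    simp [q0, hBA, hAB]

theorem univ_filter_card_eq {α : Type*} [Fintype α] (k : ℕ) :
    univ.filter (fun A : Finset α => #A = k) = powersetCard k univ := by
  ext A
  simp

theorem powersetCard_univ_filter_subset {α : Type*} [Fintype α] [DecidableEq α]
    (l : ℕ) (A : Finset α) :
    (powersetCard l (univ : Finset α)).filter (· ⊆ A) = powersetCard l A := by
  ext B
  simp [mem_powersetCard, and_comm]

theorem sum_q0_powersetCard_of_le {n l : ℕ} {A : Finset (Fin n)} (hlA : l ≤ #A) :
    ∑ B ∈ powersetCard l univ, q0 n A B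
      = (#A).choose l * (((n - #A)! * (#A - l)! * l ! : ℕ) / (n ! : ℚ)) := by
  calc ∑ B ∈ powersetCard l univ, q0 n A B
      = ∑ B ∈ powersetCard l univ,
          if B ⊆ A then ((n - #A)! * (#A - l)! * l ! : ℕ) / (n ! : ℚ) else 0 := by
        refine sum_congr rfl fun B hB => ?_
        rw [mem_powersetCard_univ] at hB
        rw [q0_of_card_le (hB ▸ hlA), hB]
    _ = _ := by
        rw [← sum_filter, powersetCard_univ_filter_subset, sum_const, card_powersetCard,
          nsmul_eq_mul]

theorem choose_mul_choose_mul_factorials {n k l : ℕ} (hlk : l ≤ k) (hkn : k ≤ n) :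
    n.choose k * k.choose l * ((n - k)! * (k - l)! * l !) = n ! := by
  calc n.choose k * k.choose l * ((n - k)! * (k - l)! * l !)
      = n.choose k * (k.choose l * l ! * (k - l)!) * (n - k)! := by ring
    _ = n ! := by
        rw [choose_mul_factorial_mul_factorial hlk, choose_mul_factorial_mul_factorial hkn]

theorem sum_sum_q0_of_le {n k l : ℕ} (hlk : l ≤ k) (hkn : k ≤ n) :
    ∑ A ∈ powersetCard k (univ : Finset (Fin n)), ∑ B ∈ powersetCard l univ, q0 n A B = 1 := by
  have hinner : ∀ A ∈ powersetCard k (univ : Finset (Fin n)),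
      ∑ B ∈ powersetCard l univ, q0 n A B
        = k.choose l * (((n - k)! * (k - l)! * l ! : ℕ) / (n ! : ℚ)) := by
    intro A hA
    rw [mem_powersetCard_univ] at hA
    rw [sum_q0_powersetCard_of_le (hA ▸ hlk), hA]
  rw [sum_congr rfl hinner, sum_const, card_powersetCard, Finset.card_univ, Fintype.card_fin,
    nsmul_eq_mul, ← mul_assoc, mul_div_assoc', div_eq_one_iff_eq (by positivity)]
  exact_mod_cast choose_mul_choose_mul_factorials hlk hkn

theorem stmt_3_general (n : ℕ) (k l : ℕ) (hkn : k ≤ n) (hln : l ≤ n) :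
    ∑ A ∈ Finset.univ.filter (fun A : Finset (Fin n) => A.card = k),
      ∑ B ∈ Finset.univ.filter (fun B : Finset (Fin n) => B.card = l), q0 n A B = 1 := by
  rw [univ_filter_card_eq, univ_filter_card_eq]
  rcases le_total l k with hlk | hkl
  · exact sum_sum_q0_of_le hlk hkn
  · rw [sum_comm]
    simp_rw [q0_comm n _ _]
    exact sum_sum_q0_of_le hkl hln

theorem stmt_3 (n : ℕ) (k l : ℕ) (hk1 : 1 ≤ k) (hkn : k ≤ n) (hl1 : 1 ≤ l) (hln : l ≤ n) :
    ∑ A ∈ Finset.univ.filter (fun A : Finset (Fin n) => A.card = k),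
      ∑ B ∈ Finset.univ.filter (fun B : Finset (Fin n) => B.card = l), q0 n A B = 1 :=
  stmt_3_general n k l hkn hln
end

section
/- With φ₁, φ₂, q₀, S̄, and s_{k,l} as above, for every k ∈ [n] one has Σ_{l=1}^n s_{k,l} = s_k, where s_k = Σ_{|A|=n-k+1} φ₁(A)/C(n,n-k+1) - Σ_{|A|=n-k} φ₁(A)/C(n,n-k) is Boland's formula for the structure signature of the first system. -/
open Finset Nat

/-- Tail bivariate structure signature of the pair of structures `φ1, φ2`. -/
def Sbar (n : ℕ) (φ1 φ2 : Finset (Fin n) → ℚ) (k l : ℕ) : ℚ :=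
  ∑ A ∈ Finset.univ.filter (fun A : Finset (Fin n) => A.card = n - k),
    ∑ B ∈ Finset.univ.filter (fun B : Finset (Fin n) => B.card = n - l),
      q0 n A B * φ1 A * φ2 B

/-! Summing the second difference `s k l` over `l` telescopes to
`(S̄(k-1,0) - S̄(k,0)) - (S̄(k-1,n) - S̄(k,n))`. The column `l = n` vanishes because the only
`B` of size `0` is `∅` and `φ₂ ∅ = 0`. In the column `l = 0` the only `B` is `[n]`, where
`φ₂ = 1` and `q₀(A,[n]) = 1 / C(n,|A|)` (the marginal property at `l = n`), so `S̄(m,0)` is the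
average of `φ₁` over the sets of size `n - m`. -/

theorem sum_Icc_one_sub_succ {M : Type*} [AddCommGroup M] (f : ℕ → M) (n : ℕ) :
    ∑ l ∈ Icc 1 n, (f (l - 1) - f l) = f 0 - f n := by
  induction n with
  | zero => simp
  | succ n ih =>
    rw [sum_Icc_succ_top (by omega), ih, Nat.add_sub_cancel]
    abel

theorem q0_univ_right {n : ℕ} (A : Finset (Fin n)) :
    q0 n A univ = (n.choose #A : ℚ)⁻¹ := by
  have hA : #A ≤ n := card_le_univ A |>.trans_eq (Fintype.card_fin n)
  have hfac : (n.choose #A * (#A)! * (n - #A)! : ℚ) = n ! := by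
    exact_mod_cast Nat.choose_mul_factorial_mul_factorial hA
  by_cases h : A = univ
  · subst h
    simp [q0, Nat.factorial_ne_zero]
  rw [q0, if_neg (mt univ_subset_iff.mp h), if_pos (subset_univ A)]
  simp only [Finset.card_fin, Nat.sub_self, Nat.factorial_zero, one_mul]
  have hchoose : (n.choose #A : ℚ) ≠ 0 := by exact_mod_cast (Nat.choose_pos hA).ne'
  rw [← hfac]
  push_cast
  field_simp

section
variable {n : ℕ} (φ1 φ2 : Finset (Fin n) → ℚ)

theorem Sbar_zero_right (u2 : φ2 univ = 1) (k : ℕ) :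
    Sbar n φ1 φ2 k 0
      = (∑ A ∈ univ.filter (fun A : Finset (Fin n) => #A = n - k), φ1 A)
          / (n.choose (n - k) : ℚ) := by
  have hB : univ.filter (fun B : Finset (Fin n) => #B = n - 0) = {univ} := by
    ext B
    simp [← card_eq_iff_eq_univ]
  rw [Sbar, hB, sum_div]
  refine sum_congr rfl fun A hA => ?_
  rw [sum_singleton, q0_univ_right, u2, (mem_filter.mp hA).2]
  ring

theorem Sbar_self_right (e2 : φ2 ∅ = 0) (k : ℕ) :
    Sbar n φ1 φ2 k n = 0 := by
  refine sum_eq_zero fun A _ => sum_eq_zero fun B hB => ?_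
  obtain rfl : B = ∅ := card_eq_zero.mp (by simpa using (mem_filter.mp hB).2)
  rw [e2, mul_zero]

end

theorem stmt_16_general (n : ℕ) (φ1 φ2 : Finset (Fin n) → ℚ)
    (e2 : φ2 ∅ = 0)
    (u2 : φ2 Finset.univ = 1)
    (s : ℕ → ℕ → ℚ)
    (hs : ∀ k l, 1 ≤ k → k ≤ n → 1 ≤ l → l ≤ n →
      s k l = Sbar n φ1 φ2 (k - 1) (l - 1) - Sbar n φ1 φ2 k (l - 1)
                - Sbar n φ1 φ2 (k - 1) l + Sbar n φ1 φ2 k l)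
    (k : ℕ) (hk1 : 1 ≤ k) (hkn : k ≤ n) :
    ∑ l ∈ Finset.Icc 1 n, s k l
      = (∑ A ∈ Finset.univ.filter (fun A : Finset (Fin n) => A.card = n - k + 1), φ1 A)
          / (n.choose (n - k + 1) : ℚ)
        - (∑ A ∈ Finset.univ.filter (fun A : Finset (Fin n) => A.card = n - k), φ1 A)
            / (n.choose (n - k) : ℚ) := by
  set f : ℕ → ℚ := fun l => Sbar n φ1 φ2 (k - 1) l - Sbar n φ1 φ2 k l
  have hsum : ∑ l ∈ Icc 1 n, s k l = ∑ l ∈ Icc 1 n, (f (l - 1) - f l) := by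
    refine sum_congr rfl fun l hl => ?_
    obtain ⟨hl1, hln⟩ := mem_Icc.mp hl
    rw [hs k l hk1 hkn hl1 hln]
    ring
  have hk : n - (k - 1) = n - k + 1 := by omega
  rw [hsum, sum_Icc_one_sub_succ]
  simp only [f, Sbar_self_right φ1 φ2 e2, Sbar_zero_right φ1 φ2 u2, hk]
  ring

theorem stmt_16 (n : ℕ) (hn : 1 ≤ n) (φ1 φ2 : Finset (Fin n) → ℚ)
    (h1 : ∀ A, φ1 A = 0 ∨ φ1 A = 1) (h2 : ∀ A, φ2 A = 0 ∨ φ2 A = 1)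
    (m1 : ∀ A B, A ⊆ B → φ1 A ≤ φ1 B) (m2 : ∀ A B, A ⊆ B → φ2 A ≤ φ2 B)
    (e1 : φ1 ∅ = 0) (e2 : φ2 ∅ = 0)
    (u1 : φ1 Finset.univ = 1) (u2 : φ2 Finset.univ = 1)
    (s : ℕ → ℕ → ℚ)
    (hs : ∀ k l, 1 ≤ k → k ≤ n → 1 ≤ l → l ≤ n →
      s k l = Sbar n φ1 φ2 (k - 1) (l - 1) - Sbar n φ1 φ2 k (l - 1)
                - Sbar n φ1 φ2 (k - 1) l + Sbar n φ1 φ2 k l)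
    (k : ℕ) (hk1 : 1 ≤ k) (hkn : k ≤ n) :
    ∑ l ∈ Finset.Icc 1 n, s k l
      = (∑ A ∈ Finset.univ.filter (fun A : Finset (Fin n) => A.card = n - k + 1), φ1 A)
          / (n.choose (n - k + 1) : ℚ)
        - (∑ A ∈ Finset.univ.filter (fun A : Finset (Fin n) => A.card = n - k), φ1 A)
            / (n.choose (n - k) : ℚ) :=
  stmt_16_general n φ1 φ2 e2 u2 s hs k hk1 hkn
end
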